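/- arXiv:1001.3513 — 3 statements merged into one kernel-verified Lean document; each statement's English description precedes it below -/
import Mathlib

section
/- For all n ≥ 1, the set A_n of inflated random Fibonacci words is closed under word reversal, i.e., A_n = {reverse(x) : x ∈ A_n}. -/
/-- Sets of inflated random Fibonacci words: A₁ = {0}, A₂ = {1},
    Aₙ = Aₙ₋₁Aₙ₋₂ ∪ Aₙ₋₂Aₙ₋₁ for n ≥ 3 (A₀ = ∅). -/
def wordSet : ℕ → Set (List Bool)
  | 0 => ∅
  | 1 => {[false]}
  | 2 => {[true]}
  | (n + 3) => Set.image2 (· ++ ·) (wordSet (n + 2)) (wordSet (n + 1)) ∪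
      Set.image2 (· ++ ·) (wordSet (n + 1)) (wordSet (n + 2))

/-- Concatenation of sets of words: UV = {uv : u ∈ U, v ∈ V}. -/
def cat (U V : Set (List Bool)) : Set (List Bool) := Set.image2 (· ++ ·) U V

/-- W[a,b]: the set of segments wₐ…w_b (1-based indexing) of words in W. -/
def seg (W : Set (List Bool)) (a b : ℕ) : Set (List Bool) :=
  (fun w => (w.drop (a - 1)).take (b - a + 1)) '' W

/-- F(S, m): the set of all contiguous factors of length m of words in S. -/
def factorSet (S : Set (List Bool)) (m : ℕ) : Set (List Bool) :=
  {x | x.length = m ∧ ∃ w ∈ S, x <:+: w}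

/-- Fₙ: the set of factors of length fₙ occurring in any inflated word. -/
def Fn (n : ℕ) : Set (List Bool) := ⋃ m ≥ 1, factorSet (wordSet m) (Nat.fib n)

theorem List.reverse_image_image2_append {α : Type*} (U V : Set (List α)) :
    List.reverse '' Set.image2 (· ++ ·) U V =
      Set.image2 (· ++ ·) (List.reverse '' V) (List.reverse '' U) := by
  rw [Set.image_image2, Set.image2_image_left, Set.image2_image_right, Set.image2_swap]
  simp only [List.reverse_append]

theorem reverse_image_wordSet : ∀ n, List.reverse '' wordSet n = wordSet n
  | 0 | 1 | 2 => by simp [wordSet]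
  | n + 3 => by
    rw [wordSet, Set.image_union, List.reverse_image_image2_append,
      List.reverse_image_image2_append, reverse_image_wordSet (n + 1),
      reverse_image_wordSet (n + 2), Set.union_comm]

theorem stmt0_general (n : ℕ) :
    wordSet n = (fun x : List Bool => x.reverse) '' wordSet n :=
  (reverse_image_wordSet n).symm

theorem stmt0 (n : ℕ) (hn : 1 ≤ n) :
    wordSet n = (fun x : List Bool => x.reverse) '' wordSet n :=
  stmt0_general n
end

section
/- For all n ≥ 3, the cardinalities satisfy |A_n| = 2|A_{n-1}||A_{n-2}| − |A_{n-2}|²|A_{n-3}|, with |A_0| = 0, |A_1| = |A_2| = 1. -/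
/-!
Words of `Aₙ` all have length `fₙ`, so concatenations of the form `UV` with `U ⊆ Aₖ` are
injective and `|UV| = |U||V|`. The whole content is the intersection
`Aₙ₋₁Aₙ₋₂ ∩ Aₙ₋₂Aₙ₋₁ = Aₙ₋₂Aₙ₋₃Aₙ₋₂`, which rests on a cancellation property proved by a joint
induction: a word of `Aₖ₊₂` that starts with a word of `Aₖ₊₁` (resp. `Aₖ`) continues with a
word of `Aₖ` (resp. `Aₖ₊₁`). Inclusion–exclusion then gives the recurrence.
-/

open Nat

lemma List.exists_eq_append_of_append_eq_append {α : Type*} {a b c d : List α}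
    (h : a ++ b = c ++ d) (hl : a.length ≤ c.length) : ∃ t, c = a ++ t ∧ b = t ++ d := by
  rcases List.append_eq_append_iff.1 h with h | ⟨t, rfl, rfl⟩
  · exact h
  · obtain rfl : t = [] := by simpa using hl
    exact ⟨[], by simp, by simp⟩

lemma ncard_cat {U V : Set (List Bool)} {L : ℕ} (hU : ∀ u ∈ U, u.length = L) :
    (cat U V).ncard = U.ncard * V.ncard := by
  rw [cat, ← Set.image_prod, Set.InjOn.ncard_image, Set.ncard_prod]
  rintro ⟨u, v⟩ ⟨hu, -⟩ ⟨u', v'⟩ ⟨hu', -⟩ h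
  obtain ⟨rfl, rfl⟩ := List.append_inj h (by rw [hU u hu, hU u' hu'])
  rfl

lemma append_mem_wordSet_add_three_inl {n : ℕ} {u v : List Bool} (hu : u ∈ wordSet (n + 2))
    (hv : v ∈ wordSet (n + 1)) : u ++ v ∈ wordSet (n + 3) :=
  Or.inl (Set.mem_image2_of_mem hu hv)

lemma append_mem_wordSet_add_three_inr {n : ℕ} {u v : List Bool} (hu : u ∈ wordSet (n + 1))
    (hv : v ∈ wordSet (n + 2)) : u ++ v ∈ wordSet (n + 3) :=
  Or.inr (Set.mem_image2_of_mem hu hv)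

lemma wordSet_add_three (n : ℕ) :
    wordSet (n + 3) =
      cat (wordSet (n + 2)) (wordSet (n + 1)) ∪ cat (wordSet (n + 1)) (wordSet (n + 2)) :=
  rfl

theorem length_of_mem_wordSet : ∀ {n : ℕ} {w : List Bool}, w ∈ wordSet n → w.length = fib n
  | 1, _, rfl => rfl
  | 2, _, rfl => rfl
  | n + 3, _, .inl ⟨_, hu, _, hv, rfl⟩ => by
    rw [List.length_append, length_of_mem_wordSet hu, length_of_mem_wordSet hv]
    exact (add_comm _ _).trans (fib_add_two (n := n + 1)).symm
  | n + 3, _, .inr ⟨_, hu, _, hv, rfl⟩ => by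
    rw [List.length_append, length_of_mem_wordSet hu, length_of_mem_wordSet hv]
    exact (fib_add_two (n := n + 1)).symm

theorem wordSet_finite : ∀ n : ℕ, (wordSet n).Finite
  | 0 => Set.finite_empty
  | 1 => Set.finite_singleton _
  | 2 => Set.finite_singleton _
  | n + 3 => ((wordSet_finite (n + 2)).image2 _ (wordSet_finite (n + 1))).union
      ((wordSet_finite (n + 1)).image2 _ (wordSet_finite (n + 2)))

lemma ncard_cat_wordSet (k : ℕ) (V : Set (List Bool)) :
    (cat (wordSet k) V).ncard = (wordSet k).ncard * V.ncard :=
  ncard_cat fun _ => length_of_mem_wordSet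

theorem mem_wordSet_of_append_mem_wordSet : ∀ k : ℕ,
    (∀ p s, p ∈ wordSet (k + 1) → p ++ s ∈ wordSet (k + 2) → s ∈ wordSet k) ∧
    (∀ p s, p ∈ wordSet k → p ++ s ∈ wordSet (k + 2) → s ∈ wordSet (k + 1))
  | 0 => ⟨by rintro p s rfl h; simp [wordSet] at h, by simp [wordSet]⟩
  | 1 => by
    have h3 : wordSet 3 = {[false, true], [true, false]} := by
      ext w; simp [wordSet, Set.image2, eq_comm]
    refine ⟨?_, ?_⟩ <;> rintro p s rfl h <;> rw [h3] at h <;> aesop (add simp wordSet)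
  | k + 2 => by
    obtain ⟨ih₀, ih₀'⟩ := mem_wordSet_of_append_mem_wordSet k
    obtain ⟨ih₁, ih₁'⟩ := mem_wordSet_of_append_mem_wordSet (k + 1)
    constructor
    · intro p s hp hps
      rcases hps with ⟨u, hu, v, hv, huv⟩ | ⟨u, hu, v, hv, huv⟩
      · obtain ⟨-, rfl⟩ := List.append_inj huv.symm
          (by rw [length_of_mem_wordSet hp, length_of_mem_wordSet hu])
        exact hv
      · rcases hp with ⟨p₁, hp₁, p₂, hp₂, rfl⟩ | ⟨p₁, hp₁, p₂, hp₂, rfl⟩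
        · rw [List.append_assoc] at huv
          obtain ⟨-, rfl⟩ := List.append_inj huv
            (by rw [length_of_mem_wordSet hp₁, length_of_mem_wordSet hu])
          exact ih₁' p₂ s hp₂ hv
        · -- `u = p₁ z` and `p₂ = z y` with `z ∈ Aₖ`, `y ∈ Aₖ₊₁`, so `v = y s`
          rw [List.append_assoc] at huv
          obtain ⟨z, rfl, hzv⟩ := List.exists_eq_append_of_append_eq_append huv.symm
            (by rw [length_of_mem_wordSet hp₁, length_of_mem_wordSet hu]
                exact fib_mono (by omega))
          have hz := ih₀ p₁ z hp₁ hu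
          obtain ⟨y, rfl, rfl⟩ := List.exists_eq_append_of_append_eq_append hzv.symm
            (by rw [length_of_mem_wordSet hz, length_of_mem_wordSet hp₂]
                exact fib_mono (by omega))
          exact ih₁' y s (ih₀' z y hz hp₂) hv
    · intro p s hp hps
      rcases hps with ⟨u, hu, v, hv, huv⟩ | ⟨u, hu, v, hv, huv⟩
      · obtain ⟨z, rfl, rfl⟩ := List.exists_eq_append_of_append_eq_append huv.symm
          (by rw [length_of_mem_wordSet hp, length_of_mem_wordSet hu]; exact fib_mono (by omega))
        exact append_mem_wordSet_add_three_inr (ih₁ p z hp hu) hv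
      · obtain ⟨-, rfl⟩ := List.append_inj huv.symm
          (by rw [length_of_mem_wordSet hp, length_of_mem_wordSet hu])
        exact hv

lemma cat_inter_cat_wordSet (m : ℕ) :
    cat (wordSet (m + 2)) (wordSet (m + 1)) ∩ cat (wordSet (m + 1)) (wordSet (m + 2)) =
      cat (wordSet (m + 1)) (cat (wordSet m) (wordSet (m + 1))) := by
  ext x
  constructor
  · rintro ⟨⟨u, hu, v, hv, rfl⟩, u', hu', v', hv', h⟩
    obtain ⟨z, rfl, -⟩ := List.exists_eq_append_of_append_eq_append h
      (by rw [length_of_mem_wordSet hu', length_of_mem_wordSet hu]; exact fib_mono (by omega))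
    have hz := (mem_wordSet_of_append_mem_wordSet m).1 u' z hu' hu
    exact ⟨u', hu', z ++ v, ⟨z, hz, v, hv, rfl⟩, (List.append_assoc u' z v).symm⟩
  · rintro ⟨u, hu, _, ⟨z, hz, v, hv, rfl⟩, rfl⟩
    cases m with
    | zero => simp [wordSet] at hz
    | succ j =>
      exact ⟨⟨u ++ z, append_mem_wordSet_add_three_inl hu hz, v, hv, List.append_assoc u z v⟩,
        u, hu, z ++ v, append_mem_wordSet_add_three_inr hz hv, rfl⟩

lemma ncard_wordSet_add_three (m : ℕ) :
    (wordSet (m + 3)).ncard +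
        (wordSet (m + 1)).ncard * ((wordSet m).ncard * (wordSet (m + 1)).ncard) =
      2 * (wordSet (m + 2)).ncard * (wordSet (m + 1)).ncard := by
  have h := Set.ncard_union_add_ncard_inter
    (cat (wordSet (m + 2)) (wordSet (m + 1))) (cat (wordSet (m + 1)) (wordSet (m + 2)))
    ((wordSet_finite _).image2 _ (wordSet_finite _))
    ((wordSet_finite _).image2 _ (wordSet_finite _))
  rw [← wordSet_add_three, cat_inter_cat_wordSet, ncard_cat_wordSet, ncard_cat_wordSet,
    ncard_cat_wordSet, ncard_cat_wordSet] at h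
  linarith

theorem stmt3 (n : ℕ) (hn : 3 ≤ n) :
    ((wordSet n).ncard : ℤ) =
      2 * (wordSet (n - 1)).ncard * (wordSet (n - 2)).ncard -
        ((wordSet (n - 2)).ncard : ℤ) ^ 2 * (wordSet (n - 3)).ncard := by
  obtain ⟨m, rfl⟩ := Nat.exists_eq_add_of_le' hn
  have h := ncard_wordSet_add_three m
  zify at h
  simp only [Nat.add_sub_cancel, show m + 3 - 1 = m + 2 from rfl, show m + 3 - 2 = m + 1 from rfl]
  linear_combination h
end

section
/- If a sequence b_n of positive integers satisfies b_1 = b_2 = 1 and (n−2)b_n = (n−1)b_{n-1}b_{n-2} for n ≥ 3, then b_n = (n−1)∏_{i=2}^{n−1}(n−i)^{f_{i−2}} for n ≥ 3, where f_k are Fibonacci numbers with f_0 = 0, f_1 = 1. -/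
open Finset

def fibWeightedProd {M : Type*} [CommMonoid M] (f : ℕ → M) (m : ℕ) : M :=
  ∏ j ∈ range m, f j ^ Nat.fib (m - j)

section fibWeightedProd

variable {M : Type*} [CommMonoid M] (f : ℕ → M)

@[simp]
lemma fibWeightedProd_zero : fibWeightedProd f 0 = 1 := by
  simp [fibWeightedProd]

@[simp]
lemma fibWeightedProd_one : fibWeightedProd f 1 = f 0 := by
  simp [fibWeightedProd]

lemma fibWeightedProd_add_two (k : ℕ) :
    fibWeightedProd f (k + 2) = f (k + 1) * fibWeightedProd f (k + 1) * fibWeightedProd f k := by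
  have hsplit : ∀ j ∈ range (k + 1),
      f j ^ Nat.fib (k + 2 - j) = f j ^ Nat.fib (k + 1 - j) * f j ^ Nat.fib (k - j) := by
    intro j hj
    rw [← pow_add, show k + 2 - j = (k - j) + 2 by grind, show k + 1 - j = (k - j) + 1 by grind,
      Nat.fib_add_two, add_comm]
  simp only [fibWeightedProd]
  rw [prod_range_succ _ (k + 1), prod_congr rfl hsplit, prod_mul_distrib,
    prod_range_succ (fun j => f j ^ Nat.fib (k - j)) k]
  simp only [Nat.sub_self, Nat.fib_zero, Nat.fib_one, pow_zero, pow_one, mul_one,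
    show k + 2 - (k + 1) = 1 by omega]
  ac_rfl

/-- Reversing the order of the factors turns the exponents `f_{i-2}` into `f_{m-j}`. -/
lemma prod_Icc_pow_fib_eq_fibWeightedProd (m : ℕ) :
    ∏ i ∈ Icc 2 (m + 2), f (m + 2 - i) ^ Nat.fib (i - 2) = fibWeightedProd f m := by
  rw [← Ico_add_one_right_eq_Icc, prod_Ico_eq_prod_range, show m + 2 + 1 - 2 = m + 1 by omega,
    ← prod_range_reflect, fibWeightedProd, prod_range_succ _ m,
    show 2 + (m + 1 - 1 - m) - 2 = 0 by omega, Nat.fib_zero, pow_zero, mul_one]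
  refine prod_congr rfl fun j hj => ?_
  rw [mem_range] at hj
  congr 2 <;> omega

end fibWeightedProd

lemma eq_mul_fibWeightedProd_of_recurrence (b : ℕ → ℕ) (h1 : b 1 = 1) (h2 : b 2 = 1)
    (hrec : ∀ n, 3 ≤ n → (n - 2) * b n = (n - 1) * b (n - 1) * b (n - 2)) (m : ℕ) :
    b (m + 3) = (m + 2) * fibWeightedProd (· + 1) m := by
  induction m using Nat.twoStepInduction with
  | zero => simpa [h1, h2] using hrec 3 le_rfl
  | one =>
    have h3 : b 3 = 2 := by simpa [h1, h2] using hrec 3 le_rfl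
    have h4 := hrec 4 (by norm_num)
    norm_num [h2, h3] at h4 ⊢
    omega
  | more k ih ih' =>
    have h := hrec (k + 5) (by omega)
    rw [show k + 5 - 2 = k + 3 by omega, show k + 5 - 1 = k + 4 by omega, ih, ih'] at h
    apply Nat.eq_of_mul_eq_mul_left (show 0 < k + 3 by omega)
    rw [h, fibWeightedProd_add_two]
    ring

theorem stmt7_general (b : ℕ → ℕ) (h1 : b 1 = 1) (h2 : b 2 = 1)
    (hrec : ∀ n, 3 ≤ n → (n - 2) * b n = (n - 1) * b (n - 1) * b (n - 2)) :
    ∀ n, 3 ≤ n → b n = (n - 1) * ∏ i ∈ Finset.Icc 2 (n - 1), (n - i) ^ Nat.fib (i - 2) := by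
  intro n hn
  obtain ⟨m, rfl⟩ := Nat.exists_eq_add_of_le' hn
  rw [show m + 3 - 1 = m + 2 by omega]
  convert eq_mul_fibWeightedProd_of_recurrence b h1 h2 hrec m using 2
  rw [← prod_Icc_pow_fib_eq_fibWeightedProd]
  refine prod_congr rfl fun i hi => ?_
  rw [mem_Icc] at hi
  congr 1
  omega

theorem stmt7 (b : ℕ → ℕ) (hpos : ∀ n, 0 < b n) (h1 : b 1 = 1) (h2 : b 2 = 1)
    (hrec : ∀ n, 3 ≤ n → (n - 2) * b n = (n - 1) * b (n - 1) * b (n - 2)) :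
    ∀ n, 3 ≤ n → b n = (n - 1) * ∏ i ∈ Finset.Icc 2 (n - 1), (n - i) ^ Nat.fib (i - 2) :=
  stmt7_general b h1 h2 hrec
end
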